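/- Let q ∈ ℂ with |q| < 1/2 and let φ(t) = 1 + q e^{2πit} + conj(q) e^{−2πit} = 1 + 2 Re(q e^{2πit}) for t ∈ [0,1] (which is strictly positive). Then for every z in the open unit disc, exp((1/2)∫₀¹ ((e^{2πit}+z)/(e^{2πit}−z)) log φ(t) dt) = c₀ + (q/c₀) z, where c₀ = sqrt((1 + sqrt(1 − 4|q|²))/2). In particular the Szegő function of φ is a polynomial of degree 1. -/

import Mathlib

open MeasureTheory Complex Filter ComplexConjugate

/-- The point `e^{2πit}` on the unit circle. -/
noncomputable def circlePt (t : ℝ) : ℂ := Complex.exp (((2 * Real.pi * t : ℝ) : ℂ) * Complex.I)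

/-- The inverse Szegő function `ψ(z) = exp(-(1/2)∫₀¹ ((e^{2πit}+z)/(e^{2πit}-z)) log φ(t) dt)`. -/
noncomputable def szegoPsi (φ : ℝ → ℝ) (z : ℂ) : ℂ :=
  Complex.exp (-(1/2 : ℂ) * ∫ t in (0:ℝ)..1,
    ((circlePt t + z) / (circlePt t - z)) * (Real.log (φ t) : ℂ))

/-- Fourier coefficients of the weight: `γ(k) = ∫₀¹ e^{2πikt} φ(t) dt`. -/
noncomputable def toeplitzCoeff (φ : ℝ → ℝ) (k : ℤ) : ℂ :=
  ∫ t in (0:ℝ)..1, Complex.exp (((2 * Real.pi * (k : ℝ) * t : ℝ) : ℂ) * Complex.I) * (φ t : ℂ)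

/-! On the unit circle the weight factors as `φ = c₀² |1 + a w|²` with `a = q / c₀²`, because
`c₀²` is the root `≥ 1/2` of `c⁴ - c² + |q|² = 0`; then `|a| < 1`. Hence `½ log φ` is the real
part of `F u = log c₀ + log (1 + a u)`, which is holomorphic on a neighbourhood of the closed disc
with `F 0` real, and the Schwarz integral formula evaluates the integral as `2 F z`, so the
exponential is `c₀ (1 + a z)`. -/

open Metric

lemma circlePt_eq_circleMap (t : ℝ) : circlePt t = circleMap 0 1 (2 * Real.pi * t) := by
  simp [circlePt, circleMap]

lemma norm_circlePt (t : ℝ) : ‖circlePt t‖ = 1 := by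
  simp [circlePt_eq_circleMap]

@[fun_prop]
lemma continuous_circlePt : Continuous circlePt := by
  unfold circlePt; fun_prop

lemma circlePt_ne_zero (t : ℝ) : circlePt t ≠ 0 :=
  norm_ne_zero_iff.1 (by simp [norm_circlePt])

lemma circlePt_sub_ne_zero (t : ℝ) {z : ℂ} (hz : ‖z‖ < 1) : circlePt t - z ≠ 0 :=
  sub_ne_zero.2 fun h => (norm_circlePt t ▸ h ▸ hz).false

lemma circleIntegral_eq_integral_circlePt (F : ℂ → ℂ) :
    (∮ w in C(0, 1), F w) = 2 * Real.pi * I * ∫ t in (0:ℝ)..1, circlePt t * F (circlePt t) := by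
  have hsub := intervalIntegral.smul_integral_comp_mul_left (a := 0) (b := 1)
    (fun θ => deriv (circleMap 0 1) θ • F (circleMap 0 1 θ)) (2 * Real.pi)
  rw [mul_zero, mul_one] at hsub
  rw [circleIntegral, ← hsub]
  simp only [deriv_circleMap, smul_eq_mul, ← circlePt_eq_circleMap]
  simp only [real_smul, mul_assoc, mul_left_comm _ I, intervalIntegral.integral_const_mul]
  push_cast
  ring

lemma conj_div_sub_of_norm_eq_one {w : ℂ} (hw : ‖w‖ = 1) (z : ℂ) :
    conj ((w + z) / (w - z)) = (1 + conj z * w) / (1 - conj z * w) := by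
  have hw0 : w ≠ 0 := norm_ne_zero_iff.1 (by simp [hw])
  rw [map_div₀, map_add, map_sub, ← inv_eq_conj hw, ← mul_div_mul_right _ _ hw0]
  congr 1 <;> field_simp

lemma continuous_herglotz {z : ℂ} (hz : ‖z‖ < 1) :
    Continuous fun t => (circlePt t + z) / (circlePt t - z) :=
  (continuous_circlePt.add continuous_const).div (continuous_circlePt.sub continuous_const)
    fun t => circlePt_sub_ne_zero t hz

section Schwarz

variable {f : ℂ → ℂ} {z : ℂ}

lemma DiffContOnCl.continuous_comp_circlePt (hf : DiffContOnCl ℂ f (ball 0 1)) :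
    Continuous fun t => f (circlePt t) :=
  hf.continuousOn_ball.comp_continuous continuous_circlePt fun t => by simp [norm_circlePt]

lemma DiffContOnCl.integral_circlePt_div_sub_mul (hf : DiffContOnCl ℂ f (ball 0 1))
    (hz : ‖z‖ < 1) : ∫ t in (0:ℝ)..1, circlePt t / (circlePt t - z) * f (circlePt t) = f z := by
  have hcauchy := hf.circleIntegral_sub_inv_smul (mem_ball_zero_iff.2 hz)
  simp only [circleIntegral_eq_integral_circlePt, smul_eq_mul, ← mul_assoc, ← div_eq_mul_inv]
    at hcauchy
  exact mul_left_cancel₀ (by simp [Real.pi_ne_zero]) hcauchy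

lemma DiffContOnCl.integral_comp_circlePt (hf : DiffContOnCl ℂ f (ball 0 1)) :
    ∫ t in (0:ℝ)..1, f (circlePt t) = f 0 := by
  simpa only [sub_zero, div_self (circlePt_ne_zero _), one_mul]
    using hf.integral_circlePt_div_sub_mul (z := 0) (by simp)

lemma DiffContOnCl.integral_herglotz_mul (hf : DiffContOnCl ℂ f (ball 0 1)) (hz : ‖z‖ < 1) :
    ∫ t in (0:ℝ)..1, (circlePt t + z) / (circlePt t - z) * f (circlePt t) = 2 * f z - f 0 := by
  have hkernel : ∀ t, (circlePt t + z) / (circlePt t - z) * f (circlePt t) =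
      2 * (circlePt t / (circlePt t - z) * f (circlePt t)) - f (circlePt t) := fun t => by
    field_simp [circlePt_sub_ne_zero t hz]
    ring
  have hcont : Continuous fun t => circlePt t / (circlePt t - z) * f (circlePt t) :=
    (continuous_circlePt.div (by fun_prop) fun t => circlePt_sub_ne_zero t hz).mul
      hf.continuous_comp_circlePt
  rw [intervalIntegral.integral_congr fun t _ => hkernel t,
    intervalIntegral.integral_sub ((hcont.intervalIntegrable _ _).const_mul 2)
      (hf.continuous_comp_circlePt.intervalIntegrable _ _),
    intervalIntegral.integral_const_mul, hf.integral_circlePt_div_sub_mul hz,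
    hf.integral_comp_circlePt]

lemma DiffContOnCl.integral_herglotz_mul_conj (hf : DiffContOnCl ℂ f (ball 0 1)) (hz : ‖z‖ < 1) :
    ∫ t in (0:ℝ)..1, (circlePt t + z) / (circlePt t - z) * conj (f (circlePt t)) =
      conj (f 0) := by
  -- On the circle the conjugated kernel is holomorphic in `w`, so only a mean value remains.
  set h : ℂ → ℂ := fun u => (1 + conj z * u) / (1 - conj z * u) * f u
  have hden : ∀ u ∈ closure (ball (0 : ℂ) 1), 1 - conj z * u ≠ 0 := fun u hu => by
    rw [closure_ball _ one_ne_zero, mem_closedBall_zero_iff] at hu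
    refine sub_ne_zero.2 fun h1 => ?_
    have : ‖conj z * u‖ < 1 := by
      rw [norm_mul, RCLike.norm_conj]
      nlinarith [norm_nonneg z, norm_nonneg u]
    simp [← h1] at this
  have hh : DiffContOnCl ℂ h (ball 0 1) :=
    DifferentiableOn.diffContOnCl (by fun_prop (disch := assumption) : DifferentiableOn ℂ
      (fun u => (1 + conj z * u) / (1 - conj z * u)) _) |>.smul hf
  calc ∫ t in (0:ℝ)..1, (circlePt t + z) / (circlePt t - z) * conj (f (circlePt t))
      = ∫ t in (0:ℝ)..1, conj (h (circlePt t)) := by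
        simp only [h, map_mul, ← conj_div_sub_of_norm_eq_one (norm_circlePt _), conj_conj]
    _ = conj (f 0) := by
        rw [intervalIntegral.intervalIntegral_conj, hh.integral_comp_circlePt]
        simp [h]

lemma DiffContOnCl.integral_herglotz_mul_re (hf : DiffContOnCl ℂ f (ball 0 1)) (hz : ‖z‖ < 1) :
    ∫ t in (0:ℝ)..1, (circlePt t + z) / (circlePt t - z) * ((f (circlePt t)).re : ℂ) =
      f z - (f 0).im * I := by
  have hK := continuous_herglotz hz
  have hf' := hf.continuous_comp_circlePt
  have hKf : IntervalIntegrable (fun t => (circlePt t + z) / (circlePt t - z) * f (circlePt t))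
      volume 0 1 := (hK.mul hf').intervalIntegrable _ _
  have hKf' : IntervalIntegrable
      (fun t => (circlePt t + z) / (circlePt t - z) * conj (f (circlePt t))) volume 0 1 :=
    (hK.mul (continuous_conj.comp hf')).intervalIntegrable _ _
  simp only [re_eq_add_conj, mul_div_assoc', mul_add, intervalIntegral.integral_div]
  rw [intervalIntegral.integral_add hKf hKf', hf.integral_herglotz_mul hz,
    hf.integral_herglotz_mul_conj hz]
  have him := sub_conj (f 0)
  push_cast at him
  linear_combination (-1 / 2 : ℂ) * him

end Schwarz

lemma sq_eq_sq_mul_one_sub_sq_of_eq_sqrt {r c : ℝ} (hr : 4 * r ^ 2 ≤ 1)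
    (hc : c = √((1 + √(1 - 4 * r ^ 2)) / 2)) : r ^ 2 = c ^ 2 * (1 - c ^ 2) := by
  have hs := Real.sq_sqrt (sub_nonneg.2 hr)
  have hc2 : c ^ 2 = (1 + √(1 - 4 * r ^ 2)) / 2 := hc ▸ Real.sq_sqrt (by positivity)
  rw [hc2]
  linear_combination hs / 4

lemma lt_sq_of_eq_sqrt {r c : ℝ} (hr : 4 * r ^ 2 < 1)
    (hc : c = √((1 + √(1 - 4 * r ^ 2)) / 2)) : r < c ^ 2 := by
  have hc2 : 1 / 2 < c ^ 2 := by
    rw [hc, Real.sq_sqrt (by positivity)]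
    linarith [Real.sqrt_pos.2 (sub_pos.2 hr)]
  have := sq_eq_sq_mul_one_sub_sq_of_eq_sqrt hr.le hc
  exact abs_lt_of_sq_lt_sq' (by nlinarith) (by positivity) |>.2

lemma one_add_two_re_mul_eq_sq_mul_norm_sq {q w : ℂ} {c : ℝ} (hc : c ≠ 0)
    (hqc : ‖q‖ ^ 2 = c ^ 2 * (1 - c ^ 2)) (hw : ‖w‖ = 1) :
    1 + 2 * (q * w).re = c ^ 2 * ‖1 + q / c ^ 2 * w‖ ^ 2 := by
  have hv : q / c ^ 2 * w = q * w / ((c ^ 2 : ℝ) : ℂ) := by push_cast; ring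
  rw [hv, ← normSq_eq_norm_sq, normSq_add, normSq_one, one_mul, conj_re, div_ofReal_re,
    normSq_eq_norm_sq, norm_div, norm_mul, hw, norm_real, Real.norm_of_nonneg (by positivity)]
  field_simp
  linear_combination -hqc

lemma diffContOnCl_log_one_add_mul {a : ℂ} (ha : ‖a‖ < 1) :
    DiffContOnCl ℂ (fun u => log (1 + a * u)) (ball 0 1) := by
  refine DifferentiableOn.diffContOnCl fun u hu => ?_
  rw [closure_ball _ one_ne_zero, mem_closedBall_zero_iff] at hu
  refine (DifferentiableAt.clog (f := fun u => 1 + a * u) (by fun_prop)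
    (mem_slitPlane_of_norm_lt_one ?_)).differentiableWithinAt
  rw [norm_mul]
  nlinarith [norm_nonneg a, norm_nonneg u]

lemma log_one_add_two_re_mul_eq {q w : ℂ} {c : ℝ} (hc : 0 < c)
    (hqc : ‖q‖ ^ 2 = c ^ 2 * (1 - c ^ 2)) (ha : ‖q / c ^ 2‖ < 1) (hw : ‖w‖ = 1) :
    Real.log (1 + 2 * (q * w).re) = 2 * ((Real.log c : ℂ) + log (1 + q / c ^ 2 * w)).re := by
  have hne : 1 + q / c ^ 2 * w ≠ 0 :=
    slitPlane_ne_zero (mem_slitPlane_of_norm_lt_one (by simpa [hw] using ha))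
  rw [one_add_two_re_mul_eq_sq_mul_norm_sq hc.ne' hqc hw,
    Real.log_mul (by positivity) (by simpa using hne), Real.log_pow, Real.log_pow, add_re,
    ofReal_re, log_re]
  push_cast
  ring

/-- for |q| < 1/2 and the weight `φ(t) = 1 + 2 Re(q e^{2πit})`, the Szegő
function is the degree-one polynomial `c₀ + (q/c₀) z` with
`c₀ = sqrt((1 + sqrt(1 − 4|q|²))/2)`. -/
theorem szego_function_tridiagonal (q : ℂ) (hq : ‖q‖ < 1/2)
    (c₀ : ℝ) (hc₀ : c₀ = Real.sqrt ((1 + Real.sqrt (1 - 4 * ‖q‖ ^ 2)) / 2)) :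
    ∀ z : ℂ, ‖z‖ < 1 →
      Complex.exp ((1/2 : ℂ) * ∫ t in (0:ℝ)..1,
          ((circlePt t + z) / (circlePt t - z)) *
            (Real.log (1 + 2 * (q * circlePt t).re) : ℂ)) =
        (c₀ : ℂ) + (q / (c₀ : ℂ)) * z := by
  intro z hz
  have hc : 0 < c₀ := hc₀ ▸ Real.sqrt_pos.2 (by positivity)
  have hq4 : 4 * ‖q‖ ^ 2 < 1 := by nlinarith [norm_nonneg q]
  have hqc := sq_eq_sq_mul_one_sub_sq_of_eq_sqrt hq4.le hc₀
  have ha : ‖q / c₀ ^ 2‖ < 1 := by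
    rw [norm_div, norm_pow, norm_real, Real.norm_of_nonneg hc.le,
      div_lt_one (by positivity)]
    exact lt_sq_of_eq_sqrt hq4 hc₀
  set f : ℂ → ℂ := fun u => (Real.log c₀ : ℂ) + log (1 + q / c₀ ^ 2 * u)
  have hf : DiffContOnCl ℂ f (ball 0 1) := (diffContOnCl_log_one_add_mul ha).const_add _
  have hlog (t : ℝ) : (Real.log (1 + 2 * (q * circlePt t).re) : ℂ) =
      2 * ((f (circlePt t)).re : ℂ) := by
    rw [log_one_add_two_re_mul_eq hc hqc ha (norm_circlePt t), ofReal_mul, ofReal_ofNat]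
  calc _ = exp (∫ t in (0:ℝ)..1, (circlePt t + z) / (circlePt t - z) * (f (circlePt t)).re) := by
        simp only [hlog, mul_left_comm _ (2 : ℂ), intervalIntegral.integral_const_mul]
        rw [one_div, mul_inv_cancel_left₀ two_ne_zero]
    _ = exp (f z) := by
        rw [hf.integral_herglotz_mul_re hz]
        simp [f]
    _ = c₀ + q / c₀ * z := by
        have hz' : ‖q / c₀ ^ 2 * z‖ < 1 := by
          rw [norm_mul]
          exact mul_lt_one_of_nonneg_of_lt_one_left (norm_nonneg _) ha hz.le
        rw [exp_add, ← ofReal_exp, Real.exp_log hc,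
          exp_log (slitPlane_ne_zero (mem_slitPlane_of_norm_lt_one hz'))]
        field_simp [ofReal_ne_zero.2 hc.ne']
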